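/- Let X be a regular simplicial set and y an n-simplex of X. Suppose μ and ν are face operators with target [n] such that the union of their images is [n] and neither image is contained in the other. If the non-degenerate parts of y∘μ and y∘ν are equal, then y is degenerate and its non-degenerate part equals the common non-degenerate part of y∘μ and y∘ν. -/

import Mathlib

open CategoryTheory GrothendieckTopology Simplicial Opposite Limits

namespace SSet

/-- Naturality of the Yoneda bijection for simplicial sets. -/
lemma yonedaEquiv_symm_naturality' {m n : SimplexCategory} (f : m ⟶ n) (X : SSet)
    (y : X.obj (op n)) :
    SSet.stdSimplex.map f ≫ (yonedaEquiv (X := X) (n := n)).symm y =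
      (yonedaEquiv (X := X) (n := m)).symm (X.map f.op y) :=
  yonedaEquiv_symm_naturality_left f y

variable (X : SSet)

/-- A simplex is degenerate if it is the image of a simplex of strictly lower degree
under a simplicial operator. -/
def Degenerate {n : ℕ} (y : X _⦋n⦌) : Prop :=
  ∃ (m : ℕ) (σ : (⦋n⦌ : SimplexCategory) ⟶ ⦋m⦌) (z : X _⦋m⦌), m < n ∧ y = X.map σ.op z

/-- A simplex is non-degenerate if it is not degenerate. -/
def Nondegenerate {n : ℕ} (y : X _⦋n⦌) : Prop := ¬ X.Degenerate y

/-- The representing map `Δ[n] ⟶ X` of the `(n+1)`-st face `y ∘ δₙ₊₁` of an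
`(n+1)`-simplex `y` of `X`. -/
noncomputable def lastFaceMap {n : ℕ} (y : X _⦋n+1⦌) : Δ[n] ⟶ X :=
  (yonedaEquiv (X := X) (n := ⦋n⦌)).symm (X.map (SimplexCategory.δ (Fin.last (n+1))).op y)

/-- The canonical map `Δ[n+1] ⊔_{Δ[n]} Y' ⟶ X`, where `Y'` is the simplicial subset of `X`
generated by the last face of `y` (i.e. the image of the representing map of that face). -/
noncomputable def regularityMap {n : ℕ} (y : X _⦋n+1⦌) :
    pushout (C := SSet.{u_1}) (SSet.stdSimplex.map (SimplexCategory.δ (Fin.last (n+1))))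
      (Subfunctor.toRange (X.lastFaceMap y)) ⟶ X :=
  pushout.desc ((yonedaEquiv (X := X) (n := ⦋n+1⦌)).symm y) (Subfunctor.range (X.lastFaceMap y)).ι
    (by rw [yonedaEquiv_symm_naturality']; exact (Subfunctor.toRange_ι _).symm)

/-- A simplicial set is regular if, for each of its non-degenerate simplices `y`,
the canonical map from the pushout `Δ[n+1] ⊔_{Δ[n]} Y'` to `X` is degreewise injective. -/
def IsRegular : Prop :=
  ∀ (n : ℕ) (y : X _⦋n+1⦌), X.Nondegenerate y →
    ∀ (k : SimplexCategoryᵒᵖ), Function.Injective ((X.regularityMap y).app k)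

end SSet


open SimplexCategory

/-!
Suppose first that `y` is non-degenerate. Regularity says that an operator `ψ` into `[n]` whose
image contains the last vertex is determined by the simplex `y ∘ ψ`. If, say, `ν` hits the last
vertex, then `ν ∘ t` is such an operator for a section `t` of `β` through a vertex that `ν`
sends there, and `y ∘ ν ∘ t = z`. For every section `s` of `α` also `y ∘ μ ∘ s = z`, hence
`μ ∘ s = ν ∘ t`; as sections of `α` can be chosen through any vertex, the image of `μ` lies in
that of `ν`, which is excluded.

So `y = w ∘ e` with `w` non-degenerate of smaller dimension, and the operators `e ∘ μ`, `e ∘ ν`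
on `w` cover it and still give faces with non-degenerate part `z`. If one of them is
surjective, uniqueness of the Eilenberg–Zilber decomposition shows that `z` is the
non-degenerate part of `w`; otherwise induction on the dimension applies to `w`.
-/

namespace SimplexCategory

lemma exists_section_apply_eq {a b : ℕ} (f : ⦋a⦌ ⟶ ⦋b⦌) [Epi f] (i : Fin (a + 1)) :
    ∃ s : ⦋b⦌ ⟶ ⦋a⦌, s ≫ f = 𝟙 _ ∧ s.toOrderHom (f.toOrderHom i) = i := by
  classical
  have hf : Function.Surjective f.toOrderHom := epi_iff_surjective.1 ‹_›
  let g := Function.update (Function.surjInv hf) (f.toOrderHom i) i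
  have hg (w : Fin (b + 1)) : f.toOrderHom (g w) = w := by
    by_cases hw : w = f.toOrderHom i
    · subst hw; simp [g]
    · simp [g, hw, Function.surjInv_eq]
  -- a section of a monotone map is automatically monotone
  have hmono : Monotone g := fun w w' h => by
    by_contra! h'
    have : w' ≤ w := by simpa only [hg] using f.toOrderHom.monotone h'.le
    exact h'.ne (congrArg g (le_antisymm h this)).symm
  exact ⟨mkHom ⟨g, hmono⟩, by ext w : 3; exact hg w, by simp [g]⟩

end SimplexCategory

namespace CategoryTheory.Limits.Types

lemma eq_of_inl_eq_inl_of_notMem_range {S X₁ X₂ : Type u} {f : S ⟶ X₁} {g : S ⟶ X₂}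
    {c : PushoutCocone f g} (hc : IsColimit c) {x₁ y₁ : X₁} (hx₁ : x₁ ∉ Set.range f)
    (h : c.inl x₁ = c.inl y₁) : x₁ = y₁ := by
  classical
  let φ := PushoutCocone.IsColimit.desc hc
    (TypeCat.ofHom fun x => if x ∈ Set.range f then none else some x)
    (TypeCat.ofHom fun _ => (none : Option X₁)) (by ext s; simp)
  have key := congrArg φ h
  have hφ (x : X₁) : φ (c.inl x) = if x ∈ Set.range f then none else some x :=
    ConcreteCategory.congr_hom (PushoutCocone.IsColimit.inl_desc hc _ _ _) x
  rw [hφ, hφ, if_neg hx₁] at key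
  split_ifs at key with hy₁
  exact Option.some_injective _ key

end CategoryTheory.Limits.Types

namespace SSet

variable {X : SSet}

lemma degenerate_iff_mem_degenerate {n : ℕ} (y : X _⦋n⦌) :
    X.Degenerate y ↔ y ∈ X.degenerate n :=
  ⟨fun ⟨m, σ, z, hm, hy⟩ => ⟨m, hm, σ, z, hy.symm⟩,
    fun ⟨m, hm, σ, z, hy⟩ => ⟨m, σ, z, hm, hy.symm⟩⟩

lemma nondegenerate_iff_mem_nonDegenerate {n : ℕ} (y : X _⦋n⦌) :
    X.Nondegenerate y ↔ y ∈ X.nonDegenerate n :=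
  (degenerate_iff_mem_degenerate y).not

lemma lt_of_degenerate_map_epi {n m : ℕ} {z : X _⦋m⦌} (hz : X.Nondegenerate z)
    (γ : (⦋n⦌ : SimplexCategory) ⟶ ⦋m⦌) [Epi γ] (h : X.Degenerate (X.map γ.op z)) : m < n := by
  refine lt_of_le_of_ne (le_of_epi γ) ?_
  rintro rfl
  rw [eq_id_of_epi γ, op_id, Functor.map_id_apply] at h
  exact hz h

lemma exists_epi_eq_map_of_map_epi_eq {n k m : ℕ} {x : X _⦋n⦌} {z : X _⦋m⦌}
    (hz : X.Nondegenerate z) (a : (⦋k⦌ : SimplexCategory) ⟶ ⦋n⦌) [Epi a]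
    (α : (⦋k⦌ : SimplexCategory) ⟶ ⦋m⦌) [Epi α] (h : X.map a.op x = X.map α.op z) :
    ∃ γ : (⦋n⦌ : SimplexCategory) ⟶ ⦋m⦌, Epi γ ∧ x = X.map γ.op z := by
  obtain ⟨p, e, _, w, rfl⟩ := X.exists_nonDegenerate x
  rw [← Functor.map_comp_apply, ← op_comp] at h
  have hz' := (nondegenerate_iff_mem_nonDegenerate z).1 hz
  obtain rfl := X.unique_nonDegenerate_dim _ (a ≫ e) w h.symm α ⟨z, hz'⟩ rfl
  obtain rfl := X.unique_nonDegenerate_simplex _ (a ≫ e) w h.symm α ⟨z, hz'⟩ rfl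
  exact ⟨e, inferInstance, rfl⟩

lemma map_comp_section_eq {n p m : ℕ} {y : X _⦋n⦌} {z : X _⦋m⦌}
    {ρ : (⦋p⦌ : SimplexCategory) ⟶ ⦋n⦌} {π : (⦋p⦌ : SimplexCategory) ⟶ ⦋m⦌}
    (h : X.map ρ.op y = X.map π.op z) {s : (⦋m⦌ : SimplexCategory) ⟶ ⦋p⦌} (hs : s ≫ π = 𝟙 _) :
    X.map (s ≫ ρ).op y = z := by
  rw [op_comp, Functor.map_comp_apply, h, ← Functor.map_comp_apply, ← op_comp, hs,
    op_id, Functor.map_id_apply]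

lemma IsRegular.eq_of_map_op_eq (hX : X.IsRegular) {n : ℕ} {y : X _⦋n + 1⦌}
    (hy : X.Nondegenerate y) {j : ℕ} {φ ψ : (⦋j⦌ : SimplexCategory) ⟶ ⦋n + 1⦌}
    (hφ : Fin.last (n + 1) ∈ Set.range φ.toOrderHom) (h : X.map φ.op y = X.map ψ.op y) :
    φ = ψ := by
  let f := SSet.stdSimplex.map (SimplexCategory.δ (Fin.last (n + 1)))
  let g := Subfunctor.toRange (X.lastFaceMap y)
  let σ : ((⦋j⦌ : SimplexCategory) ⟶ ⦋n + 1⦌) ≃ Δ[n + 1] _⦋j⦌ := stdSimplex.objEquiv.symm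
  have hdesc : pushout.inl f g ≫ X.regularityMap y = yonedaEquiv.symm y :=
    pushout.inl_desc _ _ _
  have hinl (x : (⦋j⦌ : SimplexCategory) ⟶ ⦋n + 1⦌) :
      (X.regularityMap y).app _ ((pushout.inl f g).app _ (σ x)) = X.map x.op y :=
    ConcreteCategory.congr_hom (congr_app hdesc (op ⦋j⦌)) (σ x)
  have hφf : σ φ ∉ Set.range (f.app (op ⦋j⦌)) := by
    rintro ⟨x, hx⟩
    obtain ⟨i, hi⟩ := hφ
    obtain rfl : stdSimplex.objEquiv x ≫ SimplexCategory.δ (Fin.last (n + 1)) = φ :=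
      σ.injective hx
    simp [SimplexCategory.δ, Fin.succAbove_last] at hi
  have hinj : (pushout.inl f g).app _ (σ φ) = (pushout.inl f g).app _ (σ ψ) :=
    hX n y hy _ (by rw [hinl, hinl, h])
  exact σ.injective (Types.eq_of_inl_eq_inl_of_notMem_range
    (isColimitOfHasPushoutOfPreservesColimit ((evaluation _ _).obj (op ⦋j⦌)) f g) hφf hinj)

lemma IsRegular.range_subset_of_nondegenerate (hX : X.IsRegular) {n k l m : ℕ}
    {y : X _⦋n + 1⦌} (hy : X.Nondegenerate y)
    {μ : (⦋k⦌ : SimplexCategory) ⟶ ⦋n + 1⦌} {ν : (⦋l⦌ : SimplexCategory) ⟶ ⦋n + 1⦌}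
    (hν : Fin.last (n + 1) ∈ Set.range ν.toOrderHom) {z : X _⦋m⦌}
    {α : (⦋k⦌ : SimplexCategory) ⟶ ⦋m⦌} {β : (⦋l⦌ : SimplexCategory) ⟶ ⦋m⦌} [Epi α] [Epi β]
    (h₁ : X.map μ.op y = X.map α.op z) (h₂ : X.map ν.op y = X.map β.op z) :
    Set.range μ.toOrderHom ⊆ Set.range ν.toOrderHom := by
  obtain ⟨i₀, hi₀⟩ := hν
  obtain ⟨t, ht, hti₀⟩ := exists_section_apply_eq β i₀
  have ht_last : Fin.last (n + 1) ∈ Set.range (t ≫ ν).toOrderHom :=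
    ⟨β.toOrderHom i₀, by simp [hti₀, hi₀]⟩
  rintro _ ⟨i, rfl⟩
  obtain ⟨s, hs, hsi⟩ := exists_section_apply_eq α i
  have hts : t ≫ ν = s ≫ μ := hX.eq_of_map_op_eq hy ht_last
    ((map_comp_section_eq h₂ ht).trans (map_comp_section_eq h₁ hs).symm)
  have := congr_toOrderHom_apply hts (α.toOrderHom i)
  simp only [comp_toOrderHom, OrderHom.comp_coe, Function.comp_apply, hsi] at this
  exact ⟨_, this⟩

lemma IsRegular.degenerate_of_map_eq (hX : X.IsRegular) {n k l m : ℕ} {y : X _⦋n⦌}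
    {μ : (⦋k⦌ : SimplexCategory) ⟶ ⦋n⦌} {ν : (⦋l⦌ : SimplexCategory) ⟶ ⦋n⦌}
    (hunion : Set.range μ.toOrderHom ∪ Set.range ν.toOrderHom = Set.univ)
    (hμν : ¬ Set.range μ.toOrderHom ⊆ Set.range ν.toOrderHom)
    (hνμ : ¬ Set.range ν.toOrderHom ⊆ Set.range μ.toOrderHom) {z : X _⦋m⦌}
    {α : (⦋k⦌ : SimplexCategory) ⟶ ⦋m⦌} {β : (⦋l⦌ : SimplexCategory) ⟶ ⦋m⦌} [Epi α] [Epi β]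
    (h₁ : X.map μ.op y = X.map α.op z) (h₂ : X.map ν.op y = X.map β.op z) :
    X.Degenerate y := by
  cases n with
  | zero => exact absurd (fun _ _ => ⟨0, Subsingleton.elim (α := Fin 1) _ _⟩) hμν
  | succ n =>
    by_contra hy
    have hlast : Fin.last (n + 1) ∈ Set.range μ.toOrderHom ∪ Set.range ν.toOrderHom :=
      hunion ▸ Set.mem_univ _
    rcases hlast with hμ | hν
    · exact hνμ (hX.range_subset_of_nondegenerate hy hμ h₂ h₁)
    · exact hμν (hX.range_subset_of_nondegenerate hy hν h₁ h₂)

lemma IsRegular.exists_epi_eq_map_of_map_eq (hX : X.IsRegular) {n k l m : ℕ} (y : X _⦋n⦌)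
    (μ : (⦋k⦌ : SimplexCategory) ⟶ ⦋n⦌) (ν : (⦋l⦌ : SimplexCategory) ⟶ ⦋n⦌)
    (hunion : Set.range μ.toOrderHom ∪ Set.range ν.toOrderHom = Set.univ)
    (hμν : ¬ Set.range μ.toOrderHom ⊆ Set.range ν.toOrderHom)
    (hνμ : ¬ Set.range ν.toOrderHom ⊆ Set.range μ.toOrderHom) {z : X _⦋m⦌}
    (hz : X.Nondegenerate z) (α : (⦋k⦌ : SimplexCategory) ⟶ ⦋m⦌)
    (β : (⦋l⦌ : SimplexCategory) ⟶ ⦋m⦌) [Epi α] [Epi β]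
    (h₁ : X.map μ.op y = X.map α.op z) (h₂ : X.map ν.op y = X.map β.op z) :
    ∃ γ : (⦋n⦌ : SimplexCategory) ⟶ ⦋m⦌, Epi γ ∧ y = X.map γ.op z := by
  induction n using Nat.strong_induction_on generalizing k l with
  | _ n ih =>
  have hy := hX.degenerate_of_map_eq hunion hμν hνμ h₁ h₂
  obtain ⟨p, e, _, ⟨w, hw⟩, rfl⟩ := X.exists_nonDegenerate y
  have hp : p < n :=
    lt_of_degenerate_map_epi ((nondegenerate_iff_mem_nonDegenerate w).2 hw) e hy
  suffices ∃ γ : (⦋p⦌ : SimplexCategory) ⟶ ⦋m⦌, Epi γ ∧ w = X.map γ.op z by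
    obtain ⟨γ, _, rfl⟩ := this
    exact ⟨e ≫ γ, inferInstance, by rw [op_comp, Functor.map_comp_apply]⟩
  rw [← Functor.map_comp_apply, ← op_comp] at h₁ h₂
  have hunion' : Set.range (μ ≫ e).toOrderHom ∪ Set.range (ν ≫ e).toOrderHom = Set.univ := by
    simp only [comp_toOrderHom, OrderHom.comp_coe, Set.range_comp, ← Set.image_union, hunion,
      Set.image_univ, Set.range_eq_univ]
    exact epi_iff_surjective.1 ‹_›
  by_cases hμν' : Set.range (μ ≫ e).toOrderHom ⊆ Set.range (ν ≫ e).toOrderHom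
  · have : Epi (ν ≫ e) := epi_iff_surjective.2 <| Set.range_eq_univ.1 <| by
      rwa [Set.union_eq_self_of_subset_left hμν'] at hunion'
    exact exists_epi_eq_map_of_map_epi_eq hz _ _ h₂
  by_cases hνμ' : Set.range (ν ≫ e).toOrderHom ⊆ Set.range (μ ≫ e).toOrderHom
  · have : Epi (μ ≫ e) := epi_iff_surjective.2 <| Set.range_eq_univ.1 <| by
      rwa [Set.union_eq_self_of_subset_right hνμ'] at hunion'
    exact exists_epi_eq_map_of_map_epi_eq hz _ _ h₁
  exact ih p hp w _ _ hunion' hμν' hνμ' α β h₁ h₂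

end SSet

theorem deflation_theorem_general
    (X : SSet) (hX : X.IsRegular) {n : ℕ} (y : X _⦋n⦌)
    {k l : ℕ} (μ : (⦋k⦌ : SimplexCategory) ⟶ ⦋n⦌) (ν : (⦋l⦌ : SimplexCategory) ⟶ ⦋n⦌)
    (hunion : Set.range μ.toOrderHom ∪ Set.range ν.toOrderHom = Set.univ)
    (hμν : ¬ Set.range μ.toOrderHom ⊆ Set.range ν.toOrderHom)
    (hνμ : ¬ Set.range ν.toOrderHom ⊆ Set.range μ.toOrderHom)
    (m : ℕ) (z : X _⦋m⦌) (α : (⦋k⦌ : SimplexCategory) ⟶ ⦋m⦌) (β : (⦋l⦌ : SimplexCategory) ⟶ ⦋m⦌)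
    (hα : Epi α) (hβ : Epi β) (hz : X.Nondegenerate z)
    (h₁ : X.map μ.op y = X.map α.op z) (h₂ : X.map ν.op y = X.map β.op z) :
    m < n ∧ ∃ γ : (⦋n⦌ : SimplexCategory) ⟶ ⦋m⦌, Epi γ ∧ y = X.map γ.op z := by
  obtain ⟨γ, hγ, rfl⟩ := hX.exists_epi_eq_map_of_map_eq y μ ν hunion hμν hνμ hz α β h₁ h₂
  exact ⟨SSet.lt_of_degenerate_map_epi hz γ (hX.degenerate_of_map_eq hunion hμν hνμ h₁ h₂),
    γ, hγ, rfl⟩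

/-- Let `X` be a regular simplicial set and `y` an `n`-simplex. Suppose `μ`, `ν` are face
operators with target `[n]` whose images cover `[n]`, neither image being contained in the
other. If `y ∘ μ` and `y ∘ ν` have the same non-degenerate part `z`, then `y` is
degenerate with non-degenerate part `z`. -/
theorem deflation_theorem
    (X : SSet) (hX : X.IsRegular) {n : ℕ} (y : X _⦋n⦌)
    {k l : ℕ} (μ : (⦋k⦌ : SimplexCategory) ⟶ ⦋n⦌) (ν : (⦋l⦌ : SimplexCategory) ⟶ ⦋n⦌)
    (hμ : Mono μ) (hν : Mono ν)
    (hunion : Set.range μ.toOrderHom ∪ Set.range ν.toOrderHom = Set.univ)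
    (hμν : ¬ Set.range μ.toOrderHom ⊆ Set.range ν.toOrderHom)
    (hνμ : ¬ Set.range ν.toOrderHom ⊆ Set.range μ.toOrderHom)
    (m : ℕ) (z : X _⦋m⦌) (α : (⦋k⦌ : SimplexCategory) ⟶ ⦋m⦌) (β : (⦋l⦌ : SimplexCategory) ⟶ ⦋m⦌)
    (hα : Epi α) (hβ : Epi β) (hz : X.Nondegenerate z)
    (h₁ : X.map μ.op y = X.map α.op z) (h₂ : X.map ν.op y = X.map β.op z) :
    m < n ∧ ∃ γ : (⦋n⦌ : SimplexCategory) ⟶ ⦋m⦌, Epi γ ∧ y = X.map γ.op z :=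
  deflation_theorem_general X hX y μ ν hunion hμν hνμ m z α β hα hβ hz h₁ h₂
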